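/- arXiv:1808.01948 — 3 statements merged into one kernel-verified Lean document; each statement's English description precedes it below -/
import Mathlib

section
/- The function f(x₁, x₂) = (x₁² + x₂²)^{β/2} x₁ on ℝ² is a weak solution of div(A ∇f) = 0, where A(x) = I + (β(β+2)/|x|²) · [[x₂², -x₁x₂], [-x₁x₂, x₁²]] and β > -1. -/
open MeasureTheory Real

/-- The partial gradient of a function on `ℝ × ℝ`, as a `Fin 2`-indexed vector. -/
noncomputable def pgrad (f : ℝ × ℝ → ℝ) (x : ℝ × ℝ) : Fin 2 → ℝ :=
  ![fderiv ℝ f x (1, 0), fderiv ℝ f x (0, 1)]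

namespace MeyersAux

open Set Filter

noncomputable def MW (β : ℝ) (x : ℝ × ℝ) : ℝ := (x.1 ^ 2 + x.2 ^ 2) ^ (β / 2)
noncomputable def MU (β : ℝ) (x : ℝ × ℝ) : ℝ := (x.1 ^ 2 + x.2 ^ 2) ^ (β / 2 - 1)
noncomputable def MPsi (β : ℝ) (x : ℝ × ℝ) : ℝ := MW β x * x.2
noncomputable def MD1 (β : ℝ) (x : ℝ × ℝ) : ℝ := β * MU β x * (x.1 * x.2)
noncomputable def MD2 (β : ℝ) (x : ℝ × ℝ) : ℝ := β * MU β x * x.2 ^ 2 + MW β x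

lemma r2_pos {x : ℝ × ℝ} (hx : x ≠ 0) : 0 < x.1 ^ 2 + x.2 ^ 2 := by
  have hne : x.1 ≠ 0 ∨ x.2 ≠ 0 := by
    by_contra hq
    push_neg at hq
    exact hx (Prod.ext_iff.mpr ⟨hq.1, hq.2⟩)
  rcases hne with h | h
  · have h1 : 0 < x.1 ^ 2 := lt_of_le_of_ne (sq_nonneg _) (Ne.symm (pow_ne_zero _ h))
    nlinarith [sq_nonneg x.2]
  · have h1 : 0 < x.2 ^ 2 := lt_of_le_of_ne (sq_nonneg _) (Ne.symm (pow_ne_zero _ h))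
    nlinarith [sq_nonneg x.1]

lemma MW_nonneg (β : ℝ) (x : ℝ × ℝ) : 0 ≤ MW β x := Real.rpow_nonneg (by positivity) _

lemma MU_nonneg (β : ℝ) (x : ℝ × ℝ) : 0 ≤ MU β x := Real.rpow_nonneg (by positivity) _

lemma MW_eq_MU_mul {β : ℝ} {x : ℝ × ℝ} (hx : x ≠ 0) :
    MW β x = MU β x * (x.1 ^ 2 + x.2 ^ 2) := by
  have h := r2_pos hx
  rw [MW, MU, ← Real.rpow_add_one h.ne']
  ring_nf

/-- Chain rule computation for `(x₁²+x₂²)^(β/2) * ι x`. -/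
lemma key_fderiv (β : ℝ) {x : ℝ × ℝ} (hx : x ≠ 0) (ι : ℝ × ℝ →L[ℝ] ℝ) :
    HasFDerivAt (fun y : ℝ × ℝ => (y.1 ^ 2 + y.2 ^ 2) ^ (β / 2) * ι y)
      (MW β x • ι + ι x • ((β / 2 * (x.1 ^ 2 + x.2 ^ 2) ^ (β / 2 - 1)) •
        ((2 * x.1) • ContinuousLinearMap.fst ℝ ℝ ℝ + (2 * x.2) • ContinuousLinearMap.snd ℝ ℝ ℝ))) x := by
  have h := r2_pos hx
  have hr2 : HasFDerivAt (fun y : ℝ × ℝ => y.1 ^ 2 + y.2 ^ 2)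
      ((2 * x.1) • ContinuousLinearMap.fst ℝ ℝ ℝ + (2 * x.2) • ContinuousLinearMap.snd ℝ ℝ ℝ) x := by
    have h1 : HasFDerivAt (fun y : ℝ × ℝ => y.1 * y.1 + y.2 * y.2)
        ((x.1 • ContinuousLinearMap.fst ℝ ℝ ℝ + x.1 • ContinuousLinearMap.fst ℝ ℝ ℝ) +
          (x.2 • ContinuousLinearMap.snd ℝ ℝ ℝ + x.2 • ContinuousLinearMap.snd ℝ ℝ ℝ)) x :=
      ((hasFDerivAt_fst.mul hasFDerivAt_fst).add (hasFDerivAt_snd.mul hasFDerivAt_snd))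
    have heq : ((x.1 • ContinuousLinearMap.fst ℝ ℝ ℝ + x.1 • ContinuousLinearMap.fst ℝ ℝ ℝ) +
          (x.2 • ContinuousLinearMap.snd ℝ ℝ ℝ + x.2 • ContinuousLinearMap.snd ℝ ℝ ℝ)) =
        ((2 * x.1) • ContinuousLinearMap.fst ℝ ℝ ℝ + (2 * x.2) • ContinuousLinearMap.snd ℝ ℝ ℝ) := by
      ext v <;> simp <;> ring
    rw [heq] at h1
    have hfe : (fun y : ℝ × ℝ => y.1 ^ 2 + y.2 ^ 2) = fun y : ℝ × ℝ => y.1 * y.1 + y.2 * y.2 := by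
      funext y; ring
    rw [hfe]
    exact h1
  have hrpow := hr2.rpow_const (p := β / 2) (Or.inl h.ne')
  exact hrpow.mul ι.hasFDerivAt

lemma hasFDerivAt_F (β : ℝ) {x : ℝ × ℝ} (hx : x ≠ 0) :
    ∃ D : ℝ × ℝ →L[ℝ] ℝ, HasFDerivAt (fun y : ℝ × ℝ => (y.1 ^ 2 + y.2 ^ 2) ^ (β / 2) * y.1) D x ∧
      D (1, 0) = β * MU β x * x.1 ^ 2 + MW β x ∧ D (0, 1) = β * MU β x * (x.1 * x.2) := by
  refine ⟨_, key_fderiv β hx (ContinuousLinearMap.fst ℝ ℝ ℝ), ?_, ?_⟩ <;>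
    · simp [MW, MU]
      ring

lemma hasFDerivAt_Psi (β : ℝ) {x : ℝ × ℝ} (hx : x ≠ 0) :
    ∃ D : ℝ × ℝ →L[ℝ] ℝ, HasFDerivAt (MPsi β) D x ∧
      D (1, 0) = MD1 β x ∧ D (0, 1) = MD2 β x := by
  refine ⟨_, key_fderiv β hx (ContinuousLinearMap.snd ℝ ℝ ℝ), ?_, ?_⟩ <;>
    · simp [MPsi, MW, MU, MD1, MD2]
      ring

lemma contAt_r2pow (p : ℝ) {x : ℝ × ℝ} (hx : x ≠ 0) :
    ContinuousAt (fun y : ℝ × ℝ => (y.1 ^ 2 + y.2 ^ 2) ^ p) x :=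
  (((continuous_fst.pow 2).add (continuous_snd.pow 2)).continuousAt).rpow_const
    (Or.inl (r2_pos hx).ne')

lemma contAt_MPsi (β : ℝ) {x : ℝ × ℝ} (hx : x ≠ 0) : ContinuousAt (MPsi β) x :=
  (contAt_r2pow (β / 2) hx).mul continuous_snd.continuousAt

lemma contAt_MD1 (β : ℝ) {x : ℝ × ℝ} (hx : x ≠ 0) : ContinuousAt (MD1 β) x :=
  (continuousAt_const.mul (contAt_r2pow (β / 2 - 1) hx)).mul
    ((continuous_fst.mul continuous_snd).continuousAt)

lemma contAt_MD2 (β : ℝ) {x : ℝ × ℝ} (hx : x ≠ 0) : ContinuousAt (MD2 β) x :=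
  ((continuousAt_const.mul (contAt_r2pow (β / 2 - 1) hx)).mul
    ((continuous_snd.pow 2).continuousAt)).add (contAt_r2pow (β / 2) hx)

lemma measurable_r2pow (p : ℝ) : Measurable (fun x : ℝ × ℝ => (x.1 ^ 2 + x.2 ^ 2) ^ p) := by
  have hr2 : Measurable fun x : ℝ × ℝ => x.1 ^ 2 + x.2 ^ 2 :=
    (measurable_fst.pow_const 2).add (measurable_snd.pow_const 2)
  have heq : (fun x : ℝ × ℝ => (x.1 ^ 2 + x.2 ^ 2) ^ p) = fun x =>
      if x.1 ^ 2 + x.2 ^ 2 = 0 then (0 : ℝ) ^ p else Real.exp (Real.log (x.1 ^ 2 + x.2 ^ 2) * p) := by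
    funext x
    split_ifs with h
    · rw [h]
    · rw [Real.rpow_def_of_pos (lt_of_le_of_ne (by positivity) (Ne.symm h))]
  rw [heq]
  exact Measurable.ite (hr2 (measurableSet_singleton 0)) measurable_const
    ((hr2.log.mul_const p).exp)

lemma measurable_MW (β : ℝ) : Measurable (MW β) := measurable_r2pow (β / 2)

lemma measurable_MU (β : ℝ) : Measurable (MU β) := measurable_r2pow (β / 2 - 1)

lemma measurable_MD1 (β : ℝ) : Measurable (MD1 β) :=
  ((measurable_const.mul (measurable_MU β)).mul (measurable_fst.mul measurable_snd))

lemma measurable_MD2 (β : ℝ) : Measurable (MD2 β) :=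
  ((measurable_const.mul (measurable_MU β)).mul (measurable_snd.pow_const 2)).add
    (measurable_MW β)

lemma mw_integrableOn {β : ℝ} (hβ : -1 < β) {R : ℝ} (hR : 0 ≤ R) :
    IntegrableOn (MW β) (Icc (-R) R ×ˢ Icc (-R) R) := by
  rcases le_or_gt 0 β with hb | hb
  · have hc : Continuous (MW β) := by
      rw [continuous_iff_continuousAt]
      intro x
      exact (((continuous_fst.pow 2).add (continuous_snd.pow 2)).continuousAt).rpow_const
        (Or.inr (by linarith))
    exact hc.continuousOn.integrableOn_compact (isCompact_Icc.prod isCompact_Icc)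
  · have habs : IntegrableOn (fun t : ℝ => |t| ^ β) (Icc (-R) R) := by
      have h0R : IntervalIntegrable (fun t : ℝ => |t| ^ β) volume 0 R := by
        have h1 : IntervalIntegrable (fun t : ℝ => t ^ β) volume 0 R := intervalIntegral.intervalIntegrable_rpow' hβ
        rw [intervalIntegrable_iff_integrableOn_Ioc_of_le hR] at h1 ⊢
        exact h1.congr_fun (fun t ht => by rw [abs_of_pos ht.1]) measurableSet_Ioc
      have hneg : IntervalIntegrable (fun t : ℝ => |t| ^ β) volume (-R) 0 := by
        have h2 := (IntervalIntegrable.iff_comp_neg (by simp)).mp h0R.symm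
        simpa using h2
      have h2 : IntervalIntegrable (fun t : ℝ => |t| ^ β) volume (-R) R := hneg.trans h0R
      rw [intervalIntegrable_iff_integrableOn_Ioc_of_le (by linarith)] at h2
      rw [integrableOn_Icc_iff_integrableOn_Ioc]; exact h2
    have hconst : IntegrableOn (fun _ : ℝ => (1 : ℝ)) (Icc (-R) R) :=
      integrableOn_const measure_Icc_lt_top.ne
    have hprod : Integrable (fun z : ℝ × ℝ => |z.1| ^ β * 1)
        ((volume.restrict (Icc (-R) R)).prod (volume.restrict (Icc (-R) R))) :=
      Integrable.mul_prod habs hconst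
    rw [Measure.prod_restrict, ← Measure.volume_eq_prod ℝ ℝ] at hprod
    have hae : ∀ᵐ z : ℝ × ℝ ∂(volume.restrict (Icc (-R) R ×ˢ Icc (-R) R)), z.1 ≠ 0 := by
      refine ae_restrict_of_ae ?_
      have hnull : volume ({z : ℝ × ℝ | z.1 = 0}) = 0 := by
        have hset : {z : ℝ × ℝ | z.1 = 0} = ({0} : Set ℝ) ×ˢ (univ : Set ℝ) := by
          ext ⟨a, b⟩; simp [eq_comm]
        rw [Measure.volume_eq_prod ℝ ℝ, hset, Measure.prod_prod]
        simp
      rw [ae_iff]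
      convert hnull using 2
      ext z; simp
    refine hprod.mono' ((measurable_MW β).aestronglyMeasurable.restrict) ?_
    filter_upwards [hae] with z hz
    have hz2 : 0 < z.1 ^ 2 := lt_of_le_of_ne (sq_nonneg _) (Ne.symm (pow_ne_zero _ hz))
    have h1 : ‖MW β z‖ = MW β z := by
      rw [Real.norm_eq_abs, abs_of_nonneg (MW_nonneg β z)]
    rw [h1]
    calc MW β z ≤ (z.1 ^ 2) ^ (β / 2) :=
          Real.rpow_le_rpow_of_nonpos hz2 (by nlinarith [sq_nonneg z.2]) (by linarith)
      _ = |z.1| ^ β * 1 := by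
          rw [← sq_abs, ← Real.rpow_natCast |z.1| 2, ← Real.rpow_mul (abs_nonneg _),
            show ((2 : ℕ) : ℝ) * (β / 2) = β by push_cast; ring, mul_one]

lemma integrable_of_bound {β : ℝ} (hβ : -1 < β) {R C : ℝ} (hR : 0 ≤ R) (g : ℝ × ℝ → ℝ)
    (hm : AEStronglyMeasurable g volume)
    (hz : ∀ x : ℝ × ℝ, x ∉ Icc (-R) R ×ˢ Icc (-R) R → g x = 0)
    (hb : ∀ x, ‖g x‖ ≤ C * MW β x) : Integrable g := by
  have hsupp : Function.support g ⊆ Icc (-R) R ×ˢ Icc (-R) R := by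
    intro x hx
    by_contra hx'
    exact hx (hz x hx')
  rw [← integrableOn_iff_integrable_of_support_subset hsupp]
  exact ((mw_integrableOn hβ hR).const_mul C).mono' hm.restrict
    (Filter.Eventually.of_forall fun x => hb x)

lemma abs_mul_le_r2 (a b : ℝ) : |a * b| ≤ a ^ 2 + b ^ 2 := by
  rw [abs_mul]
  nlinarith [sq_nonneg (|a| - |b|), abs_nonneg a, abs_nonneg b, sq_abs a, sq_abs b]

lemma MD1_bound (β : ℝ) (x : ℝ × ℝ) : ‖MD1 β x‖ ≤ |β| * MW β x := by
  rcases eq_or_ne x 0 with rfl | hx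
  · have : MD1 β 0 = 0 := by simp [MD1]
    rw [this, norm_zero]
    exact mul_nonneg (abs_nonneg β) (MW_nonneg β 0)
  · rw [MW_eq_MU_mul hx, MD1, Real.norm_eq_abs, abs_mul, abs_mul,
      abs_of_nonneg (MU_nonneg β x)]
    have h1 : |x.1 * x.2| ≤ x.1 ^ 2 + x.2 ^ 2 := abs_mul_le_r2 x.1 x.2
    calc |β| * MU β x * |x.1 * x.2| ≤ |β| * MU β x * (x.1 ^ 2 + x.2 ^ 2) :=
          mul_le_mul_of_nonneg_left h1 (mul_nonneg (abs_nonneg β) (MU_nonneg β x))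
      _ = |β| * (MU β x * (x.1 ^ 2 + x.2 ^ 2)) := by ring

lemma MD2_bound (β : ℝ) (x : ℝ × ℝ) : ‖MD2 β x‖ ≤ (|β| + 1) * MW β x := by
  rcases eq_or_ne x 0 with rfl | hx
  · have h0 : MD2 β 0 = MW β 0 := by simp [MD2]
    rw [h0, Real.norm_eq_abs, abs_of_nonneg (MW_nonneg β 0)]
    nlinarith [MW_nonneg β 0, abs_nonneg β]
  · have h1 : ‖MD2 β x‖ ≤ |β| * MU β x * x.2 ^ 2 + MW β x := by
      rw [MD2]
      refine le_trans (norm_add_le _ _) ?_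
      rw [Real.norm_eq_abs, Real.norm_eq_abs, abs_mul, abs_mul,
        abs_of_nonneg (MU_nonneg β x), abs_of_nonneg (sq_nonneg x.2),
        abs_of_nonneg (MW_nonneg β x)]
    refine le_trans h1 ?_
    have h2 : |β| * MU β x * x.2 ^ 2 ≤ |β| * MW β x := by
      rw [MW_eq_MU_mul hx, mul_assoc]
      refine mul_le_mul_of_nonneg_left ?_ (abs_nonneg β)
      exact mul_le_mul_of_nonneg_left (by nlinarith [sq_nonneg x.1]) (MU_nonneg β x)
    nlinarith [MW_nonneg β x]

lemma MPsi_bound (β : ℝ) {R : ℝ} {x : ℝ × ℝ} (hx : x ∈ Icc (-R) R ×ˢ Icc (-R) R) :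
    ‖MPsi β x‖ ≤ R * MW β x := by
  have h2 : |x.2| ≤ R := abs_le.mpr ⟨hx.2.1, hx.2.2⟩
  rw [MPsi, Real.norm_eq_abs, abs_mul, abs_of_nonneg (MW_nonneg β x), mul_comm (MW β x)]
  exact mul_le_mul_of_nonneg_right h2 (MW_nonneg β x)

/-- integration by parts on a line against a compactly supported function. -/
lemma ibp_aux {u u' v v' : ℝ → ℝ} (hu : ∀ t, HasDerivAt u (u' t) t)
    (hv : ∀ t, HasDerivAt v (v' t) t) (hcu : Continuous u) (hcu' : Continuous u')
    (hcv : Continuous v) (hcv' : Continuous v') {R : ℝ}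
    (hsv : ∀ t, t ∉ Icc (-R) R → v t = 0) (hsv' : ∀ t, t ∉ Icc (-R) R → v' t = 0) :
    ∫ t, u t * v' t = - ∫ t, u' t * v t := by
  have hcs : ∀ w : ℝ → ℝ, (∀ t, t ∉ Icc (-R) R → w t = 0) → HasCompactSupport w := by
    intro w hw
    exact HasCompactSupport.intro isCompact_Icc hw
  have h1 : Integrable (u * v') volume :=
    (hcu.mul hcv').integrable_of_hasCompactSupport
      ((hcs v' hsv').mul_left)
  have h2 : Integrable (u' * v) volume :=
    (hcu'.mul hcv).integrable_of_hasCompactSupport ((hcs v hsv).mul_left)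
  have h3 : Integrable (u * v) volume :=
    (hcu.mul hcv).integrable_of_hasCompactSupport ((hcs v hsv).mul_left)
  exact integral_mul_deriv_eq_deriv_mul_of_integrable (fun t _ => hu t) (fun t _ => hv t) h1 h2 h3

noncomputable def DV (v : ℝ × ℝ) (φ : ℝ × ℝ → ℝ) (z : ℝ × ℝ) : ℝ := fderiv ℝ φ z v

lemma contDiff_DV (v : ℝ × ℝ) {φ : ℝ × ℝ → ℝ} (hφ : ContDiff ℝ (⊤ : ℕ∞) φ) :
    ContDiff ℝ (⊤ : ℕ∞) (DV v φ) :=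
  (hφ.fderiv_right (by simp)).clm_apply contDiff_const

lemma support_DV (v : ℝ × ℝ) (φ : ℝ × ℝ → ℝ) :
    Function.support (DV v φ) ⊆ tsupport φ := by
  intro z hz
  refine support_fderiv_subset ℝ (f := φ) ?_
  simp only [Function.mem_support]
  intro hzero
  exact hz (by simp [DV, hzero])

lemma tsupport_DV (v : ℝ × ℝ) (φ : ℝ × ℝ → ℝ) : tsupport (DV v φ) ⊆ tsupport φ :=
  closure_minimal (support_DV v φ) (isClosed_tsupport φ)

lemma schwarz {φ : ℝ × ℝ → ℝ} (hφ : ContDiff ℝ (⊤ : ℕ∞) φ) (z : ℝ × ℝ) :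
    DV (0, 1) (DV (1, 0) φ) z = DV (1, 0) (DV (0, 1) φ) z := by
  have hdφ : ∀ y, HasFDerivAt φ (fderiv ℝ φ y) y := fun y =>
    ((hφ.differentiable (by simp)).differentiableAt).hasFDerivAt
  have hdd : DifferentiableAt ℝ (fderiv ℝ φ) z :=
    ((hφ.fderiv_right (m := 1) (WithTop.coe_le_coe.mpr le_top)).differentiable one_ne_zero).differentiableAt
  have hsym := second_derivative_symmetric hdφ hdd.hasFDerivAt
  have key : ∀ v w : ℝ × ℝ, DV w (DV v φ) z = (fderiv ℝ (fderiv ℝ φ) z) w v := by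
    intro v w
    have he : DV v φ = fun y => (fderiv ℝ φ y) ((fun _ => v) y) := rfl
    rw [DV, he, fderiv_clm_apply hdd (differentiableAt_const v)]
    simp
  rw [key, key, hsym (0, 1) (1, 0)]

lemma hasDerivAt_sect2 {g : ℝ × ℝ → ℝ} {a t : ℝ} (hg : DifferentiableAt ℝ g (a, t)) :
    HasDerivAt (fun s => g (a, s)) (fderiv ℝ g (a, t) (0, 1)) t := by
  have hγ : HasDerivAt (fun s : ℝ => ((a, s) : ℝ × ℝ)) ((0 : ℝ), (1 : ℝ)) t :=
    (hasDerivAt_const t a).prodMk (hasDerivAt_id t)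
  exact hg.hasFDerivAt.comp_hasDerivAt t hγ

lemma hasDerivAt_sect1 {g : ℝ × ℝ → ℝ} {b t : ℝ} (hg : DifferentiableAt ℝ g (t, b)) :
    HasDerivAt (fun s => g (s, b)) (fderiv ℝ g (t, b) (1, 0)) t := by
  have hγ : HasDerivAt (fun s : ℝ => ((s, b) : ℝ × ℝ)) ((1 : ℝ), (0 : ℝ)) t :=
    (hasDerivAt_id t).prodMk (hasDerivAt_const t b)
  exact hg.hasFDerivAt.comp_hasDerivAt t hγ

lemma hasDerivAt_Psi_sect2 (β : ℝ) {a : ℝ} (ha : a ≠ 0) (t : ℝ) :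
    HasDerivAt (fun s => MPsi β (a, s)) (MD2 β (a, t)) t := by
  obtain ⟨D, hD, h1, h2⟩ := hasFDerivAt_Psi β (x := (a, t))
    (fun h => ha (congrArg Prod.fst h))
  have hγ : HasDerivAt (fun s : ℝ => ((a, s) : ℝ × ℝ)) ((0 : ℝ), (1 : ℝ)) t :=
    (hasDerivAt_const t a).prodMk (hasDerivAt_id t)
  have h := hD.comp_hasDerivAt t hγ
  exact h2 ▸ h

lemma hasDerivAt_Psi_sect1 (β : ℝ) {b : ℝ} (hb : b ≠ 0) (t : ℝ) :
    HasDerivAt (fun s => MPsi β (s, b)) (MD1 β (t, b)) t := by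
  obtain ⟨D, hD, h1, h2⟩ := hasFDerivAt_Psi β (x := (t, b))
    (fun h => hb (congrArg Prod.snd h))
  have hγ : HasDerivAt (fun s : ℝ => ((s, b) : ℝ × ℝ)) ((1 : ℝ), (0 : ℝ)) t :=
    (hasDerivAt_id t).prodMk (hasDerivAt_const t b)
  have h := hD.comp_hasDerivAt t hγ
  exact h1 ▸ h

end MeyersAux

/-- `f(x₁,x₂) = (x₁²+x₂²)^{β/2} x₁` is a weak solution of `div(A ∇ f) = 0` on `ℝ²`,
where `A` is the Meyers conic matrix. -/
theorem meyers_weak_solution (β : ℝ) (hβ : -1 < β)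
    (f : ℝ × ℝ → ℝ) (hf : ∀ x : ℝ × ℝ, f x = (x.1 ^ 2 + x.2 ^ 2) ^ (β / 2) * x.1)
    (A : ℝ × ℝ → Matrix (Fin 2) (Fin 2) ℝ)
    (hA : ∀ x : ℝ × ℝ, x ≠ 0 → A x =
      (1 : Matrix (Fin 2) (Fin 2) ℝ) + (β * (β + 2) / (x.1 ^ 2 + x.2 ^ 2)) •
        Matrix.of ![![x.2 ^ 2, -(x.1 * x.2)], ![-(x.1 * x.2), x.1 ^ 2]]) :
    ∀ φ : ℝ × ℝ → ℝ, ContDiff ℝ (⊤ : ℕ∞) φ → HasCompactSupport φ →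
      ∫ x : ℝ × ℝ, ∑ i : Fin 2, ∑ j : Fin 2, A x i j * pgrad f x j * pgrad φ x i = 0 := by
  classical
  intro φ hφ hφc
  have hfe : f = fun y : ℝ × ℝ => (y.1 ^ 2 + y.2 ^ 2) ^ (β / 2) * y.1 := funext hf
  subst hfe
  open MeyersAux Set in
  -- a square containing the support of φ
  obtain ⟨R, hR0, hsub⟩ : ∃ R : ℝ, 0 ≤ R ∧
      tsupport φ ⊆ Icc (-R) R ×ˢ Icc (-R) R := by
    obtain ⟨R, hR⟩ := hφc.isCompact.isBounded.subset_closedBall 0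
    refine ⟨max R 0, le_max_right _ _, ?_⟩
    intro z hz
    have hz' : z ∈ Metric.closedBall (0 : ℝ × ℝ) (max R 0) :=
      Metric.closedBall_subset_closedBall (le_max_left _ _) (hR hz)
    rw [show ((0 : ℝ × ℝ)) = (((0 : ℝ), (0 : ℝ)) : ℝ × ℝ) from rfl,
      ← closedBall_prod_same, Real.closedBall_eq_Icc] at hz'
    simpa using hz'
  set Sq : Set (ℝ × ℝ) := Icc (-R) R ×ˢ Icc (-R) R with hSq
  -- the derivative functions of φ
  have hg1c : Continuous (DV (1, 0) φ) := (contDiff_DV _ hφ).continuous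
  have hg2c : Continuous (DV (0, 1) φ) := (contDiff_DV _ hφ).continuous
  have hg12c : Continuous (DV (0, 1) (DV (1, 0) φ)) :=
    (contDiff_DV _ (contDiff_DV _ hφ)).continuous
  have hg21c : Continuous (DV (1, 0) (DV (0, 1) φ)) :=
    (contDiff_DV _ (contDiff_DV _ hφ)).continuous
  -- support conditions
  have hz1 : ∀ v : ℝ × ℝ, ∀ z : ℝ × ℝ, z ∉ Sq → DV v φ z = 0 := by
    intro v z hz
    by_contra h
    exact hz (hsub (support_DV v φ (Function.mem_support.mpr h)))
  have hz2 : ∀ v w : ℝ × ℝ, ∀ z : ℝ × ℝ, z ∉ Sq → DV w (DV v φ) z = 0 := by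
    intro v w z hz
    by_contra h
    exact hz (hsub (tsupport_DV v φ (support_DV w (DV v φ) (Function.mem_support.mpr h))))
  -- bounds for the derivative functions
  have hbd : ∀ g : ℝ × ℝ → ℝ, Continuous g → (∀ z ∉ Sq, g z = 0) →
      ∃ M : ℝ, 0 ≤ M ∧ ∀ z, ‖g z‖ ≤ M := by
    intro g hgc hgz
    have hcs : HasCompactSupport g :=
      HasCompactSupport.intro (isCompact_Icc.prod isCompact_Icc) hgz
    obtain ⟨M, hM⟩ := hgc.bounded_above_of_compact_support hcs
    exact ⟨M, le_trans (norm_nonneg _) (hM 0), hM⟩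
  obtain ⟨M1, hM1p, hM1⟩ := hbd _ hg1c (hz1 (1, 0))
  obtain ⟨M2, hM2p, hM2⟩ := hbd _ hg2c (hz1 (0, 1))
  obtain ⟨M12, hM12p, hM12⟩ := hbd _ hg12c (hz2 (1, 0) (0, 1))
  obtain ⟨M21, hM21p, hM21⟩ := hbd _ hg21c (hz2 (0, 1) (1, 0))
  -- integrability of the three relevant products
  have hPint : Integrable (fun x => MD2 β x * DV (1, 0) φ x) volume := by
    refine integrable_of_bound hβ (C := (|β| + 1) * M1) hR0 _
      (((measurable_MD2 β).mul hg1c.measurable).aestronglyMeasurable)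
      (fun x hx => by rw [hz1 _ x hx, mul_zero]) (fun x => ?_)
    rw [norm_mul, show (|β| + 1) * M1 * MW β x = ((|β| + 1) * MW β x) * M1 by ring]
    exact mul_le_mul (MD2_bound β x) (hM1 x) (norm_nonneg _)
      (mul_nonneg (by positivity) (MW_nonneg β x))
  have hQint : Integrable (fun x => MD1 β x * DV (0, 1) φ x) volume := by
    refine integrable_of_bound hβ (C := |β| * M2) hR0 _
      (((measurable_MD1 β).mul hg2c.measurable).aestronglyMeasurable)
      (fun x hx => by rw [hz1 _ x hx, mul_zero]) (fun x => ?_)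
    rw [norm_mul, show |β| * M2 * MW β x = (|β| * MW β x) * M2 by ring]
    exact mul_le_mul (MD1_bound β x) (hM2 x) (norm_nonneg _)
      (mul_nonneg (abs_nonneg β) (MW_nonneg β x))
  have hpsi_bound : ∀ (g : ℝ × ℝ → ℝ) (M : ℝ), 0 ≤ M → (∀ z, ‖g z‖ ≤ M) →
      (∀ z ∉ Sq, g z = 0) → ∀ x, ‖MPsi β x * g x‖ ≤ R * M * MW β x := by
    intro g M hMp hM hgz x
    by_cases hx : x ∈ Sq
    · rw [norm_mul, show R * M * MW β x = (R * MW β x) * M by ring]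
      exact mul_le_mul (MPsi_bound β hx) (hM x) (norm_nonneg _)
        (mul_nonneg hR0 (MW_nonneg β x))
    · rw [hgz x hx, mul_zero, norm_zero]
      exact mul_nonneg (mul_nonneg hR0 hMp) (MW_nonneg β x)
  have hpsi_meas : ∀ g : ℝ × ℝ → ℝ, Continuous g →
      AEStronglyMeasurable (fun x => MPsi β x * g x) volume :=
    fun g hg => (((measurable_MW β).mul measurable_snd).mul hg.measurable).aestronglyMeasurable
  have hS12int : Integrable (fun x => MPsi β x * DV (0, 1) (DV (1, 0) φ) x) volume :=
    integrable_of_bound hβ (C := R * M12) hR0 _ (hpsi_meas _ hg12c)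
      (fun x hx => by rw [hz2 _ _ x hx, mul_zero])
      (hpsi_bound _ M12 hM12p hM12 (hz2 (1, 0) (0, 1)))
  have hS21int : Integrable (fun x => MPsi β x * DV (1, 0) (DV (0, 1) φ) x) volume :=
    integrable_of_bound hβ (C := R * M21) hR0 _ (hpsi_meas _ hg21c)
      (fun x hx => by rw [hz2 _ _ x hx, mul_zero])
      (hpsi_bound _ M21 hM21p hM21 (hz2 (0, 1) (1, 0)))
  -- pointwise identity
  have hpoint : ∀ x : ℝ × ℝ, x ≠ 0 →
      ∑ i : Fin 2, ∑ j : Fin 2, A x i j *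
          pgrad (fun y : ℝ × ℝ => (y.1 ^ 2 + y.2 ^ 2) ^ (β / 2) * y.1) x j * pgrad φ x i
        = (β + 1) * (MD2 β x * DV (1, 0) φ x - MD1 β x * DV (0, 1) φ x) := by
    intro x hx
    obtain ⟨D, hD, h10, h01⟩ := hasFDerivAt_F β hx
    have hr := (r2_pos hx).ne'
    rw [hA x hx]
    have hpg : pgrad (fun y : ℝ × ℝ => (y.1 ^ 2 + y.2 ^ 2) ^ (β / 2) * y.1) x =
        ![β * MU β x * x.1 ^ 2 + MW β x, β * MU β x * (x.1 * x.2)] := by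
      rw [pgrad, hD.fderiv, h10, h01]
    rw [hpg]
    have hMW : MW β x = MU β x * (x.1 ^ 2 + x.2 ^ 2) := MW_eq_MU_mul hx
    simp only [Fin.sum_univ_two, pgrad, Matrix.cons_val_zero, Matrix.cons_val_one,
      Matrix.head_cons, Matrix.add_apply, Matrix.smul_apply, Matrix.one_apply,
      Matrix.of_apply, smul_eq_mul, DV, MD1, MD2, hMW]
    norm_num
    field_simp
    ring
  -- the two a.e. facts
  have hae2 : ∀ᵐ x : ℝ × ℝ, x ≠ 0 := by
    have hset : {a : ℝ × ℝ | ¬ a ≠ 0} = {(0 : ℝ × ℝ)} := by ext z; simp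
    rw [ae_iff, hset]
    exact measure_singleton _
  have hae1 : ∀ᵐ t : ℝ, t ≠ 0 := by
    have hset : {a : ℝ | ¬ a ≠ 0} = {(0 : ℝ)} := by ext z; simp
    rw [ae_iff, hset]
    exact measure_singleton _
  -- replace the integrand a.e.
  have hcongr : ∫ x : ℝ × ℝ, ∑ i : Fin 2, ∑ j : Fin 2, A x i j *
      pgrad (fun y : ℝ × ℝ => (y.1 ^ 2 + y.2 ^ 2) ^ (β / 2) * y.1) x j * pgrad φ x i
      = ∫ x : ℝ × ℝ, (β + 1) * (MD2 β x * DV (1, 0) φ x - MD1 β x * DV (0, 1) φ x) := by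
    refine integral_congr_ae ?_
    filter_upwards [hae2] with x hx
    exact hpoint x hx
  rw [hcongr, integral_const_mul]
  -- Fubini and integration by parts, first term
  have hsect_contP : ∀ p : ℝ × ℝ → ℝ, (∀ {y : ℝ × ℝ}, y ≠ 0 → ContinuousAt p y) →
      ∀ {a : ℝ}, a ≠ 0 → Continuous (fun t => p (a, t)) := by
    intro p hp a ha
    rw [continuous_iff_continuousAt]
    intro t
    exact (hp (fun h => ha (congrArg Prod.fst h))).comp
      ((continuous_const.prodMk continuous_id).continuousAt)
  have hsect_contQ : ∀ p : ℝ × ℝ → ℝ, (∀ {y : ℝ × ℝ}, y ≠ 0 → ContinuousAt p y) →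
      ∀ {b : ℝ}, b ≠ 0 → Continuous (fun t => p (t, b)) := by
    intro p hp b hb
    rw [continuous_iff_continuousAt]
    intro t
    exact (hp (fun h => hb (congrArg Prod.snd h))).comp
      ((continuous_id.prodMk continuous_const).continuousAt)
  have hP : ∫ x : ℝ × ℝ, MD2 β x * DV (1, 0) φ x
      = - ∫ x : ℝ × ℝ, MPsi β x * DV (0, 1) (DV (1, 0) φ) x := by
    have hPint' := hPint
    have hS12int' := hS12int
    rw [Measure.volume_eq_prod ℝ ℝ] at hPint' hS12int' ⊢
    rw [MeasureTheory.integral_prod _ hPint', MeasureTheory.integral_prod _ hS12int']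
    rw [← integral_neg]
    refine integral_congr_ae ?_
    filter_upwards [hae1] with a ha
    have h := ibp_aux (u := fun t => MPsi β (a, t)) (u' := fun t => MD2 β (a, t))
      (v := fun t => DV (1, 0) φ (a, t)) (v' := fun t => DV (0, 1) (DV (1, 0) φ) (a, t))
      (R := R)
      (fun t => hasDerivAt_Psi_sect2 β ha t)
      (fun t => hasDerivAt_sect2
        (((contDiff_DV (1, 0) hφ).differentiable (by simp)).differentiableAt))
      (hsect_contP _ (fun hy => contAt_MPsi β hy) ha)
      (hsect_contP _ (fun hy => contAt_MD2 β hy) ha)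
      (hg1c.comp (continuous_const.prodMk continuous_id))
      (hg12c.comp (continuous_const.prodMk continuous_id))
      (fun t ht => hz1 _ (a, t) (fun hmem => ht hmem.2))
      (fun t ht => hz2 _ _ (a, t) (fun hmem => ht hmem.2))
    linarith [h]
  -- second term
  have hQ : ∫ x : ℝ × ℝ, MD1 β x * DV (0, 1) φ x
      = - ∫ x : ℝ × ℝ, MPsi β x * DV (1, 0) (DV (0, 1) φ) x := by
    have hQint' := hQint
    have hS21int' := hS21int
    rw [Measure.volume_eq_prod ℝ ℝ] at hQint' hS21int' ⊢
    rw [MeasureTheory.integral_prod_symm _ hQint', MeasureTheory.integral_prod_symm _ hS21int']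
    rw [← integral_neg]
    refine integral_congr_ae ?_
    filter_upwards [hae1] with b hb
    have h := ibp_aux (u := fun t => MPsi β (t, b)) (u' := fun t => MD1 β (t, b))
      (v := fun t => DV (0, 1) φ (t, b)) (v' := fun t => DV (1, 0) (DV (0, 1) φ) (t, b))
      (R := R)
      (fun t => hasDerivAt_Psi_sect1 β hb t)
      (fun t => hasDerivAt_sect1
        (((contDiff_DV (0, 1) hφ).differentiable (by simp)).differentiableAt))
      (hsect_contQ _ (fun hy => contAt_MPsi β hy) hb)
      (hsect_contQ _ (fun hy => contAt_MD1 β hy) hb)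
      (hg2c.comp (continuous_id.prodMk continuous_const))
      (hg21c.comp (continuous_id.prodMk continuous_const))
      (fun t ht => hz1 _ (t, b) (fun hmem => ht hmem.1))
      (fun t ht => hz2 _ _ (t, b) (fun hmem => ht hmem.1))
    linarith [h]
  -- conclude using symmetry of second derivatives
  have hsch : ∫ x : ℝ × ℝ, MPsi β x * DV (0, 1) (DV (1, 0) φ) x
      = ∫ x : ℝ × ℝ, MPsi β x * DV (1, 0) (DV (0, 1) φ) x := by
    refine integral_congr_ae (Filter.Eventually.of_forall fun x => ?_)
    exact congrArg (fun t => MPsi β x * t) (schwarz hφ x)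
  rw [integral_sub hPint hQint, hP, hQ, hsch]
  ring
end

section
/- Let e^{-tL} be a semigroup with heat kernel p_t satisfying the Gaussian upper bound p_t(x,y) ≤ C V(x,√t)^{-1} exp(-d(x,y)²/(ct)) on a doubling space, and let h ≥ 0 satisfy the average decay (1/V(x,r)) ∫_{B(x,r)} h dμ ≤ C r^{-ε} for r > 1. Then for p ∈ (2,∞), p' = p/(p-1), and st > 1: ∫ p_{st}(x,y) h(y) |f(y)| dμ(y) ≤ C (st)^{-ε/(2p')} (∫ V(x,√{st})^{-1} e^{-d(x,y)²/(2cst)} |f(y)|^p dμ(y))^{1/p} for every f ∈ L^p and every x, provided h is bounded. -/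
/-!
Put `V = μ (B(x, √(st)))` and `Γ y = V⁻¹ exp (-d(x,y)² / (2cst))`. Since
`exp (-d²/(cst)) ≤ exp (-d²/(2cst))`, the Gaussian bound gives `p_{st}(x,·) ≤ C_G Γ`, and Hölder's
inequality for the splitting `(Γ^{1/p'} h) (Γ^{1/p} f)` bounds the integral by
`(∫ Γ h^{p'})^{1/p'} (∫ Γ f^p)^{1/p}`, where `h^{p'} ≤ K^{p'-1} h`. On the annulus
`2^{j-1} √(st) ≤ d(x,y) < 2^j √(st)` the Gaussian is at most `e^{1/(2c)} e^{-4^j/(8c)}`, while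
doubling and (GD) bound the mass of `h` on `B(x, 2^j √(st))` by `C_D^j (st)^{-ε/2} V`. The
superexponential decay of the Gaussian beats the geometric growth `C_D^j`, so
`∫ Γ h ≲ (st)^{-ε/2}`.

No Borel structure is assumed, so neither the kernel nor `d(x, ·)` need be measurable. The
annular sum, built on measurable hulls of balls, is the measurable majorant that the
Young-inequality proof of Hölder's inequality needs.
-/

open MeasureTheory Metric Real ENNReal

theorem rpow_le_rpow_sub_one_mul {q : ℝ} {a K : ℝ≥0∞} (haK : a ≤ K) (hq : 1 ≤ q) :
    a ^ q ≤ K ^ (q - 1) * a :=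
  calc a ^ q = a ^ (q - 1 + 1) := by rw [sub_add_cancel]
    _ = a ^ (q - 1) * a := by
      rw [ENNReal.rpow_add_of_nonneg _ _ (sub_nonneg.2 hq) zero_le_one, ENNReal.rpow_one]
    _ ≤ K ^ (q - 1) * a := by gcongr

theorem inv_mul_ofReal_mul_exp_le {c T : ℝ} (hc : 0 < c) (hT : 0 < T) (V : ℝ≥0∞) (A d : ℝ) :
    V⁻¹ * ENNReal.ofReal (A * Real.exp (-d ^ 2 / (c * T))) ≤
      ENNReal.ofReal A * (V⁻¹ * ENNReal.ofReal (Real.exp (-d ^ 2 / (2 * c * T)))) := by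
  rw [ENNReal.ofReal_mul' (Real.exp_pos _).le, mul_left_comm]
  gcongr _ * (_ * ENNReal.ofReal (Real.exp ?_))
  rw [div_le_div_iff₀ (by positivity) (by positivity)]
  nlinarith [mul_nonneg (sq_nonneg d) (mul_pos hc hT).le]

theorem rpow_inv_mul_ofReal_rpow_le {M : ℝ≥0∞} (hM : M ≠ ∞) {q : ℝ} (hq : 0 < q) {T : ℝ}
    (hT : 0 < T) (β : ℝ) :
    (M * ENNReal.ofReal (T ^ β)) ^ q⁻¹ ≤
      ENNReal.ofReal (((M ^ q⁻¹).toReal + 1) * T ^ (β * q⁻¹)) := by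
  rw [ENNReal.mul_rpow_of_nonneg _ _ (by positivity),
    ENNReal.ofReal_rpow_of_nonneg (by positivity) (by positivity), ← Real.rpow_mul hT.le,
    ENNReal.ofReal_mul (by positivity)]
  gcongr
  rw [ENNReal.le_ofReal_iff_toReal_le (ENNReal.rpow_ne_top_of_nonneg (by positivity) hM)
    (by positivity)]
  linarith

section Holder

variable {α : Type*} [MeasurableSpace α] {μ : Measure α} {p q : ℝ} {F G Φ : α → ℝ≥0∞}

theorem setLIntegral_le_mul_measure {s : Set α} {f : α → ℝ≥0∞} {c : ℝ≥0∞} (hs : μ s ≠ ∞)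
    (havg : (μ s)⁻¹ * ∫⁻ y in s, f y ∂μ ≤ c) : ∫⁻ y in s, f y ∂μ ≤ c * μ s := by
  rcases eq_or_ne (μ s) 0 with hs0 | hs0
  · simp [Measure.restrict_eq_zero.2 hs0]
  · rw [mul_comm]
    exact (ENNReal.inv_mul_le_iff hs0 hs).1 havg

theorem mul_mul_lintegral_mul_le (hpq : p.HolderConjugate q) (hΦ : Measurable Φ)
    (hFΦ : ∀ y, F y ^ q ≤ Φ y) (a : ℝ≥0∞) {b : ℝ≥0∞} (hb : b ≠ ∞) :
    a * b * ∫⁻ y, F y * G y ∂μ ≤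
      a ^ q / ENNReal.ofReal q * ∫⁻ y, Φ y ∂μ +
        b ^ p / ENNReal.ofReal p * ∫⁻ y, G y ^ p ∂μ := by
  have young : ∀ y, a * b * (F y * G y) ≤
      a ^ q / ENNReal.ofReal q * Φ y + b ^ p / ENNReal.ofReal p * G y ^ p := fun y =>
    calc a * b * (F y * G y) = (a * F y) * (b * G y) := by ring
      _ ≤ (a * F y) ^ q / ENNReal.ofReal q + (b * G y) ^ p / ENNReal.ofReal p :=
        ENNReal.young_inequality _ _ hpq.symm
      _ = a ^ q / ENNReal.ofReal q * F y ^ q + b ^ p / ENNReal.ofReal p * G y ^ p := by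
        rw [ENNReal.mul_rpow_of_nonneg _ _ hpq.symm.nonneg,
          ENNReal.mul_rpow_of_nonneg _ _ hpq.nonneg, ENNReal.mul_div_right_comm,
          ENNReal.mul_div_right_comm (a := b ^ p)]
      _ ≤ _ := by gcongr; exact hFΦ y
  have hb' : b ^ p / ENNReal.ofReal p ≠ ∞ :=
    ENNReal.div_ne_top (ENNReal.rpow_ne_top_of_nonneg hpq.nonneg hb)
      (ENNReal.ofReal_pos.2 hpq.pos).ne'
  calc a * b * ∫⁻ y, F y * G y ∂μ ≤ ∫⁻ y, a * b * (F y * G y) ∂μ :=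
        lintegral_const_mul_le _ _
    _ ≤ ∫⁻ y, (a ^ q / ENNReal.ofReal q * Φ y + b ^ p / ENNReal.ofReal p * G y ^ p) ∂μ :=
      lintegral_mono young
    _ = _ := by
      rw [lintegral_add_left (hΦ.const_mul _), lintegral_const_mul _ hΦ,
        lintegral_const_mul' _ _ hb']

theorem lintegral_mul_eq_zero_of_lintegral_rpow_eq_zero (hpq : p.HolderConjugate q)
    (hΦ : Measurable Φ) (hFΦ : ∀ y, F y ^ q ≤ Φ y) (hΦ_ne_top : ∫⁻ y, Φ y ∂μ ≠ ∞)
    (hG : ∫⁻ y, G y ^ p ∂μ = 0) : ∫⁻ y, F y * G y ∂μ = 0 := by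
  by_contra hL
  obtain ⟨n, hn⟩ := ENNReal.exists_nat_mul_gt (b := 1 ^ q / ENNReal.ofReal q * ∫⁻ y, Φ y ∂μ) hL
    (ENNReal.mul_ne_top (ENNReal.div_ne_top (by simp) (ENNReal.ofReal_pos.2 hpq.symm.pos).ne')
      hΦ_ne_top)
  have hn' := mul_mul_lintegral_mul_le (μ := μ) (G := G) hpq hΦ hFΦ 1 (ENNReal.natCast_ne_top n)
  rw [hG, mul_zero, add_zero, one_mul] at hn'
  exact (hn.trans_le hn').false

/-- Hölder's inequality in which neither `F` nor `G` need be measurable: only `F ^ q` needs a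
measurable majorant. -/
theorem lintegral_mul_le_of_rpow_le (hpq : p.HolderConjugate q) (hΦ : Measurable Φ)
    (hFΦ : ∀ y, F y ^ q ≤ Φ y) (hΦ_ne_top : ∫⁻ y, Φ y ∂μ ≠ ∞) :
    ∫⁻ y, F y * G y ∂μ ≤ (∫⁻ y, Φ y ∂μ) ^ q⁻¹ * (∫⁻ y, G y ^ p ∂μ) ^ p⁻¹ := by
  have hq := hpq.symm.pos
  have hp := hpq.pos
  set η := ∫⁻ y, Φ y ∂μ
  set I := ∫⁻ y, G y ^ p ∂μ
  set L := ∫⁻ y, F y * G y ∂μ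
  rcases eq_or_ne η 0 with hη0 | hη0
  · have hFG : ∀ᵐ y ∂μ, F y * G y = 0 := by
      filter_upwards [(lintegral_eq_zero_iff hΦ).1 hη0] with y hy
      have hFq : F y ^ q = 0 := le_antisymm ((hFΦ y).trans_eq hy) zero_le
      rw [(ENNReal.rpow_eq_zero_iff_of_pos hq).1 hFq, zero_mul]
    rw [show L = 0 from (lintegral_congr_ae hFG).trans lintegral_zero]
    exact zero_le
  -- Young's inequality for `(a F) (b G)`, with `a` and `b` normalising both integrals
  set a := η ^ (-q⁻¹)
  have ha0 : a ≠ 0 := by simp [a, ENNReal.rpow_eq_zero_iff, hη0, hΦ_ne_top, hq]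
  have ha : a ^ q / ENNReal.ofReal q * η = (ENNReal.ofReal q)⁻¹ := by
    rw [← ENNReal.rpow_mul, neg_mul, inv_mul_cancel₀ hq.ne', ENNReal.rpow_neg_one,
      div_eq_mul_inv, mul_right_comm, ENNReal.inv_mul_cancel hη0 hΦ_ne_top, one_mul]
  rcases eq_or_ne I 0 with hI0 | hI0
  · exact (lintegral_mul_eq_zero_of_lintegral_rpow_eq_zero hpq hΦ hFΦ hΦ_ne_top hI0).trans_le
      zero_le
  rcases eq_or_ne I ∞ with hIt | hIt
  · rw [hIt, ENNReal.top_rpow_of_pos (inv_pos.2 hp), ENNReal.mul_top]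
    · exact le_top
    · exact (ENNReal.rpow_pos (pos_iff_ne_zero.2 hη0) hΦ_ne_top).ne'
  set b := I ^ (-p⁻¹)
  have hb0 : b ≠ 0 := by simp [b, ENNReal.rpow_eq_zero_iff, hI0, hIt, hp]
  have hb : b ^ p / ENNReal.ofReal p * I = (ENNReal.ofReal p)⁻¹ := by
    rw [← ENNReal.rpow_mul, neg_mul, inv_mul_cancel₀ hp.ne', ENNReal.rpow_neg_one,
      div_eq_mul_inv, mul_right_comm, ENNReal.inv_mul_cancel hI0 hIt, one_mul]
  have hab : a * b * L ≤ 1 := by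
    have hab := mul_mul_lintegral_mul_le (μ := μ) (G := G) hpq hΦ hFΦ a
      (by simp [b, ENNReal.rpow_eq_top_iff, hI0, hp.le] : b ≠ ∞)
    rwa [ha, hb, ← ENNReal.ofReal_inv_of_pos hq, ← ENNReal.ofReal_inv_of_pos hp,
      ← ENNReal.ofReal_add (inv_nonneg.2 hq.le) (inv_nonneg.2 hp.le), add_comm,
      hpq.inv_add_inv_eq_one, ENNReal.ofReal_one] at hab
  calc L ≤ (a * b)⁻¹ := ENNReal.le_inv_iff_mul_le.2 (by rwa [mul_comm])
    _ = η ^ q⁻¹ * I ^ p⁻¹ := by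
      rw [ENNReal.mul_inv (Or.inl ha0) (Or.inr hb0), ← ENNReal.rpow_neg, ← ENNReal.rpow_neg,
        neg_neg, neg_neg]

theorem lintegral_mul_mul_le_of_le_mul (hpq : p.HolderConjugate q) {P h f Γ Ψ : α → ℝ≥0∞}
    {A K : ℝ≥0∞} (hA : A ≠ ∞) (hK : K ≠ ∞) (hP : ∀ y, P y ≤ A * Γ y) (hh : ∀ y, h y ≤ K)
    (hΨ : Measurable Ψ) (hΓΨ : ∀ y, Γ y * h y ≤ Ψ y) (hΨ_ne_top : ∫⁻ y, Ψ y ∂μ ≠ ∞) :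
    ∫⁻ y, P y * h y * f y ∂μ ≤
      (A ^ q * K ^ (q - 1) * ∫⁻ y, Ψ y ∂μ) ^ q⁻¹ * (∫⁻ y, Γ y * f y ^ p ∂μ) ^ p⁻¹ := by
  have hq := hpq.symm.pos
  have hp := hpq.pos
  have hsplit : ∀ y, P y * h y * f y ≤ (A * Γ y ^ q⁻¹ * h y) * (Γ y ^ p⁻¹ * f y) := fun y =>
    calc P y * h y * f y ≤ A * Γ y * h y * f y := by gcongr; exact hP y
      _ = A * (Γ y ^ q⁻¹ * Γ y ^ p⁻¹) * h y * f y := by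
        rw [← ENNReal.rpow_add_of_nonneg _ _ (inv_nonneg.2 hq.le) (inv_nonneg.2 hp.le),
          add_comm, hpq.inv_add_inv_eq_one, ENNReal.rpow_one]
      _ = _ := by ring
  have hF : ∀ y, (A * Γ y ^ q⁻¹ * h y) ^ q ≤ A ^ q * K ^ (q - 1) * Ψ y := fun y =>
    calc (A * Γ y ^ q⁻¹ * h y) ^ q = A ^ q * Γ y * h y ^ q := by
          rw [ENNReal.mul_rpow_of_nonneg _ _ hq.le, ENNReal.mul_rpow_of_nonneg _ _ hq.le,
            ENNReal.rpow_inv_rpow hq.ne']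
      _ ≤ A ^ q * Γ y * (K ^ (q - 1) * h y) := by
        gcongr; exact rpow_le_rpow_sub_one_mul (hh y) hpq.symm.lt.le
      _ = A ^ q * K ^ (q - 1) * (Γ y * h y) := by ring
      _ ≤ _ := by gcongr; exact hΓΨ y
  have hG : ∀ y, (Γ y ^ p⁻¹ * f y) ^ p = Γ y * f y ^ p := fun y => by
    rw [ENNReal.mul_rpow_of_nonneg _ _ hp.le, ENNReal.rpow_inv_rpow hp.ne']
  have hAK : A ^ q * K ^ (q - 1) ≠ ∞ :=
    ENNReal.mul_ne_top (ENNReal.rpow_ne_top_of_nonneg hq.le hA)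
      (ENNReal.rpow_ne_top_of_nonneg hpq.symm.sub_one_pos.le hK)
  calc ∫⁻ y, P y * h y * f y ∂μ ≤ ∫⁻ y, (A * Γ y ^ q⁻¹ * h y) * (Γ y ^ p⁻¹ * f y) ∂μ :=
        lintegral_mono hsplit
    _ ≤ _ := by
      rw [← lintegral_const_mul _ hΨ, ← lintegral_congr hG]
      refine lintegral_mul_le_of_rpow_le hpq (hΨ.const_mul _) hF ?_
      rw [lintegral_const_mul _ hΨ]
      exact ENNReal.mul_ne_top hAK hΨ_ne_top

end Holder

/-- Dominates `exp (-d² / (b r²))` on the annulus `2 ^ (j - 1) * r ≤ d < 2 ^ j * r`, and is `≥ 1`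
for `j = 0`. -/
noncomputable def annularWeight (b : ℝ) (j : ℕ) : ℝ := Real.exp ((1 - 4 ^ j / 4) / b)

noncomputable def annularSum (b : ℝ) (D : ℝ≥0∞) : ℝ≥0∞ :=
  ∑' j : ℕ, ENNReal.ofReal (annularWeight b j) * D ^ j

theorem exp_neg_sq_div_le_annularWeight {b r d : ℝ} (hb : 0 < b) (hr : 0 < r) {j : ℕ}
    (hd : ∀ k < j, 2 ^ k * r ≤ d) : Real.exp (-d ^ 2 / (b * r ^ 2)) ≤ annularWeight b j := by
  have hsq : (4 ^ j / 4 - 1) * r ^ 2 ≤ d ^ 2 := by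
    cases j with
    | zero => nlinarith
    | succ k =>
      have h2k : (0 : ℝ) ≤ 2 ^ k * r := by positivity
      calc (4 ^ (k + 1) / 4 - 1) * r ^ 2 ≤ (2 ^ k * r) ^ 2 := by
            rw [mul_pow, ← pow_mul, mul_comm k 2, pow_mul]; norm_num [pow_succ]; nlinarith
        _ ≤ d ^ 2 := pow_le_pow_left₀ h2k (hd k k.lt_succ_self) 2
  refine Real.exp_le_exp.2 ?_
  rw [div_le_div_iff₀ (by positivity) hb]
  nlinarith

theorem annularWeight_le (b : ℝ) (hb : 0 < b) (m j : ℕ) :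
    annularWeight b j ≤ Real.exp b⁻¹ * m.factorial * (4 * b) ^ m / (4 ^ m) ^ j := by
  have hx : 0 < 4 ^ j / (4 * b) := by positivity
  calc annularWeight b j = Real.exp b⁻¹ / Real.exp (4 ^ j / (4 * b)) := by
        rw [annularWeight, ← Real.exp_sub]; congr 1; field_simp
    _ ≤ Real.exp b⁻¹ / ((4 ^ j / (4 * b)) ^ m / m.factorial) := by
        gcongr; exact Real.pow_div_factorial_le_exp _ hx.le m
    _ = _ := by
      rw [div_div_eq_mul_div, div_pow, ← pow_mul, mul_comm j m, pow_mul]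
      field_simp

theorem annularSum_ne_top {b : ℝ} (hb : 0 < b) {D : ℝ≥0∞} (hD : D ≠ ∞) : annularSum b D ≠ ∞ := by
  obtain ⟨m, hm⟩ : ∃ m : ℕ, D < 4 ^ m := by
    obtain ⟨n, hn⟩ := ENNReal.exists_nat_gt hD
    exact ⟨n, hn.trans_le (by exact_mod_cast (Nat.lt_pow_self (by norm_num : 1 < 4)).le)⟩
  set A : ℝ := Real.exp b⁻¹ * m.factorial * (4 * b) ^ m
  have hterm : ∀ j : ℕ, ENNReal.ofReal (annularWeight b j) * D ^ j ≤
      ENNReal.ofReal A * (D / 4 ^ m) ^ j := fun j =>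
    calc ENNReal.ofReal (annularWeight b j) * D ^ j
        ≤ ENNReal.ofReal (A / (4 ^ m) ^ j) * D ^ j := by
          gcongr; exact annularWeight_le b hb m j
      _ = _ := by
        rw [ENNReal.ofReal_div_of_pos (by positivity), ENNReal.ofReal_pow (by positivity),
          ENNReal.ofReal_pow (by norm_num), ENNReal.ofReal_ofNat, div_eq_mul_inv,
          div_eq_mul_inv, mul_pow, ← ENNReal.inv_pow]
        ring
  refine ne_top_of_le_ne_top ?_ (ENNReal.tsum_le_tsum hterm)
  rw [ENNReal.tsum_mul_left, ENNReal.tsum_geometric]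
  refine ENNReal.mul_ne_top ENNReal.ofReal_ne_top (ENNReal.inv_ne_top.2 ?_)
  exact (tsub_pos_of_lt ((ENNReal.div_lt_iff (by simp) (by simp)).2 (by simpa using hm))).ne'

section Annuli

variable {X : Type*} [MetricSpace X] [MeasurableSpace X] {μ : Measure X} {C_D : ℝ}

theorem measure_ball_two_pow_mul_le
    (hdoub : ∀ (x : X) (r : ℝ), 0 < r → μ (ball x (2 * r)) ≤ ENNReal.ofReal C_D * μ (ball x r))
    (x : X) {r : ℝ} (hr : 0 < r) (j : ℕ) :
    μ (ball x (2 ^ j * r)) ≤ ENNReal.ofReal C_D ^ j * μ (ball x r) := by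
  induction j with
  | zero => simp
  | succ k ih =>
    calc μ (ball x (2 ^ (k + 1) * r)) = μ (ball x (2 * (2 ^ k * r))) := by ring_nf
      _ ≤ ENNReal.ofReal C_D * μ (ball x (2 ^ k * r)) := hdoub x _ (by positivity)
      _ ≤ ENNReal.ofReal C_D * (ENNReal.ofReal C_D ^ k * μ (ball x r)) := by gcongr
      _ = _ := by ring

/-- Balls need not be measurable, hence their measurable hulls. -/
noncomputable def annularMajorant (μ : Measure X) (h : X → ℝ≥0∞) (b : ℝ) (x : X) (r : ℝ)
    (y : X) : ℝ≥0∞ :=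
  ∑' j : ℕ, ENNReal.ofReal (annularWeight b j) *
    (toMeasurable μ (ball x (2 ^ j * r))).indicator h y

theorem measurable_annularMajorant {h : X → ℝ≥0∞} (hh : Measurable h) (b : ℝ) (x : X)
    (r : ℝ) : Measurable (annularMajorant μ h b x r) :=
  Measurable.tsum fun _ => (hh.indicator (measurableSet_toMeasurable _ _)).const_mul _

theorem ofReal_exp_mul_le_annularMajorant (h : X → ℝ≥0∞) {b : ℝ} (hb : 0 < b) (x : X) {r : ℝ}
    (hr : 0 < r) (y : X) :
    ENNReal.ofReal (Real.exp (-dist x y ^ 2 / (b * r ^ 2))) * h y ≤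
      annularMajorant μ h b x r y := by
  classical
  have hex : ∃ j : ℕ, dist x y < 2 ^ j * r := by
    obtain ⟨j, hj⟩ := pow_unbounded_of_one_lt (dist x y / r) one_lt_two
    exact ⟨j, (div_lt_iff₀ hr).1 hj⟩
  set j := Nat.find hex
  have hy : y ∈ toMeasurable μ (ball x (2 ^ j * r)) :=
    subset_toMeasurable _ _ (mem_ball'.2 (Nat.find_spec hex))
  have hexp : Real.exp (-dist x y ^ 2 / (b * r ^ 2)) ≤ annularWeight b j :=
    exp_neg_sq_div_le_annularWeight hb hr fun k hk => not_lt.1 (Nat.find_min hex hk)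
  calc ENNReal.ofReal (Real.exp (-dist x y ^ 2 / (b * r ^ 2))) * h y
      ≤ ENNReal.ofReal (annularWeight b j) *
          (toMeasurable μ (ball x (2 ^ j * r))).indicator h y := by
        rw [Set.indicator_of_mem hy]; gcongr
    _ ≤ annularMajorant μ h b x r y :=
      ENNReal.le_tsum (f := fun j => ENNReal.ofReal (annularWeight b j) *
        (toMeasurable μ (ball x (2 ^ j * r))).indicator h y) j

theorem inv_mul_lintegral_annularMajorant_le
    (hdoub : ∀ (x : X) (r : ℝ), 0 < r → μ (ball x (2 * r)) ≤ ENNReal.ofReal C_D * μ (ball x r))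
    {h : X → ℝ≥0∞} (hh : Measurable h) {ε Ch : ℝ} (hε : 0 ≤ ε)
    (hGD : ∀ (x : X) (r : ℝ), 1 < r →
      (μ (ball x r))⁻¹ * ∫⁻ y in ball x r, h y ∂μ ≤ ENNReal.ofReal (Ch * r ^ (-ε)))
    (b : ℝ) (x : X) {r : ℝ} (hr : 1 < r) :
    (μ (ball x r))⁻¹ * ∫⁻ y, annularMajorant μ h b x r y ∂μ ≤
      annularSum b (ENNReal.ofReal C_D) * ENNReal.ofReal (Ch * r ^ (-ε)) := by
  set V := μ (ball x r)
  rcases eq_or_ne V ∞ with hV | hV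
  · simp [hV]
  have hr0 : 0 < r := one_pos.trans hr
  have hball : ∀ j : ℕ, ∫⁻ y in toMeasurable μ (ball x (2 ^ j * r)), h y ∂μ ≤
      ENNReal.ofReal C_D ^ j * ENNReal.ofReal (Ch * r ^ (-ε)) * V := fun j => by
    have hrj : r ≤ 2 ^ j * r := le_mul_of_one_le_left hr0.le (one_le_pow₀ one_le_two)
    have hμ := measure_ball_two_pow_mul_le hdoub x hr0 j
    have hfin : μ (ball x (2 ^ j * r)) ≠ ∞ :=
      ne_top_of_le_ne_top (ENNReal.mul_ne_top (ENNReal.pow_ne_top ENNReal.ofReal_ne_top) hV) hμ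
    rw [Measure.restrict_toMeasurable hfin]
    calc ∫⁻ y in ball x (2 ^ j * r), h y ∂μ
        ≤ ENNReal.ofReal (Ch * (2 ^ j * r) ^ (-ε)) * μ (ball x (2 ^ j * r)) :=
          setLIntegral_le_mul_measure hfin (hGD x _ (hr.trans_le hrj))
      _ ≤ ENNReal.ofReal (Ch * r ^ (-ε)) * (ENNReal.ofReal C_D ^ j * V) := by
          rw [ENNReal.ofReal_mul' (by positivity), ENNReal.ofReal_mul' (by positivity)]
          gcongr ENNReal.ofReal Ch * ENNReal.ofReal ?_ * ?_
          exact Real.rpow_le_rpow_of_nonpos hr0 hrj (neg_nonpos.2 hε)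
      _ = _ := by ring
  have hint : ∫⁻ y, annularMajorant μ h b x r y ∂μ =
      ∑' j : ℕ, ENNReal.ofReal (annularWeight b j) *
        ∫⁻ y in toMeasurable μ (ball x (2 ^ j * r)), h y ∂μ := by
    simp only [annularMajorant]
    rw [lintegral_tsum fun j =>
      ((hh.indicator (measurableSet_toMeasurable _ _)).const_mul _).aemeasurable]
    congr 1; funext j
    rw [lintegral_const_mul _ (hh.indicator (measurableSet_toMeasurable _ _)),
      lintegral_indicator (measurableSet_toMeasurable _ _)]
  calc V⁻¹ * ∫⁻ y, annularMajorant μ h b x r y ∂μ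
      ≤ V⁻¹ * ∑' j : ℕ, ENNReal.ofReal (annularWeight b j) *
          (ENNReal.ofReal C_D ^ j * ENNReal.ofReal (Ch * r ^ (-ε)) * V) := by
        rw [hint]; gcongr with j; exact hball j
    _ = annularSum b (ENNReal.ofReal C_D) * ENNReal.ofReal (Ch * r ^ (-ε)) * (V⁻¹ * V) := by
        simp only [annularSum, ← mul_assoc]
        rw [ENNReal.tsum_mul_right, ENNReal.tsum_mul_right]; ring
    _ ≤ _ := mul_le_of_le_one_right zero_le (ENNReal.inv_mul_le_one V)

theorem lintegral_kernel_mul_mul_le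
    (hdoub : ∀ (x : X) (r : ℝ), 0 < r → μ (ball x (2 * r)) ≤ ENNReal.ofReal C_D * μ (ball x r))
    {h : X → ℝ≥0∞} (hh : Measurable h) {K : ℝ} (hbdd : ∀ y, h y ≤ ENNReal.ofReal K)
    {ε Ch : ℝ} (hε : 0 ≤ ε)
    (hGD : ∀ (x : X) (r : ℝ), 1 < r →
      (μ (ball x r))⁻¹ * ∫⁻ y in ball x r, h y ∂μ ≤ ENNReal.ofReal (Ch * r ^ (-ε)))
    {p q : ℝ} (hpq : p.HolderConjugate q) {c T CG : ℝ} (hc : 0 < c) (hT : 1 < T) (x : X)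
    {P f : X → ℝ≥0∞}
    (hP : ∀ y, P y ≤ (μ (ball x √T))⁻¹ * ENNReal.ofReal (CG * Real.exp (-dist x y ^ 2 / (c * T)))) :
    ∫⁻ y, P y * h y * f y ∂μ ≤
      (ENNReal.ofReal CG ^ q * ENNReal.ofReal K ^ (q - 1) *
          (annularSum (2 * c) (ENNReal.ofReal C_D) * ENNReal.ofReal (Ch * √T ^ (-ε)))) ^ q⁻¹ *
        (∫⁻ y, (μ (ball x √T))⁻¹ * ENNReal.ofReal (Real.exp (-dist x y ^ 2 / (2 * c * T))) *
          f y ^ p ∂μ) ^ p⁻¹ := by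
  have hr : 1 < √T := (Real.lt_sqrt zero_le_one).2 (by simpa using hT)
  have hrT : √T ^ 2 = T := Real.sq_sqrt (by linarith)
  set V := μ (ball x √T)
  set Ψ := annularMajorant μ h (2 * c) x √T
  have hΨ_meas : Measurable Ψ := measurable_annularMajorant hh _ x _
  have hΨ := inv_mul_lintegral_annularMajorant_le hdoub hh hε hGD (2 * c) x hr
  have hΓΨ : ∀ y, V⁻¹ * ENNReal.ofReal (Real.exp (-dist x y ^ 2 / (2 * c * T))) * h y ≤
      V⁻¹ * Ψ y := fun y => by
    rw [mul_assoc, ← hrT]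
    gcongr
    exact ofReal_exp_mul_le_annularMajorant h (by positivity) x (by positivity) y
  refine (lintegral_mul_mul_le_of_le_mul hpq ENNReal.ofReal_ne_top ENNReal.ofReal_ne_top
    (fun y => (hP y).trans (inv_mul_ofReal_mul_exp_le hc (by linarith) V CG (dist x y))) hbdd
    (hΨ_meas.const_mul _) hΓΨ ?_).trans ?_
  · rw [lintegral_const_mul _ hΨ_meas]
    exact ne_top_of_le_ne_top (ENNReal.mul_ne_top
      (annularSum_ne_top (by positivity) ENNReal.ofReal_ne_top) ENNReal.ofReal_ne_top) hΨ
  · have hq := hpq.symm.pos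
    rw [lintegral_const_mul _ hΨ_meas]
    gcongr

end Annuli

theorem kernel_decay_estimate_general {X : Type*} [MetricSpace X] [MeasurableSpace X]
    (μ : Measure X) (C_D : ℝ)
    (hdoub : ∀ (x : X) (r : ℝ), 0 < r →
      μ (ball x (2 * r)) ≤ ENNReal.ofReal C_D * μ (ball x r))
    (pk : ℝ → X → X → ℝ≥0∞) (CG c : ℝ) (hc : 0 < c)
    (hGauss : ∀ (t : ℝ) (x y : X), 0 < t →
      pk t x y ≤ (μ (ball x (Real.sqrt t)))⁻¹ *
        ENNReal.ofReal (CG * Real.exp (-(dist x y) ^ 2 / (c * t))))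
    (h : X → ℝ≥0∞) (hmeas : Measurable h) (K : ℝ) (hbdd : ∀ x, h x ≤ ENNReal.ofReal K)
    (ε Ch : ℝ) (hε₀ : 0 < ε)
    (hGD : ∀ (x : X) (r : ℝ), 1 < r →
      (μ (ball x r))⁻¹ * ∫⁻ y in ball x r, h y ∂μ ≤ ENNReal.ofReal (Ch * r ^ (-ε)))
    (p : ℝ) (hp : 2 < p) :
    ∃ C : ℝ, 0 < C ∧ ∀ (s t : ℝ) (x : X) (f : X → ℝ≥0∞), Measurable f →
      0 < s → 0 < t → 1 < s * t →
      ∫⁻ y, pk (s * t) x y * h y * f y ∂μ ≤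
        ENNReal.ofReal (C * (s * t) ^ (-(ε / (2 * (p / (p - 1)))))) *
          (∫⁻ y, (μ (ball x (Real.sqrt (s * t))))⁻¹ *
            ENNReal.ofReal (Real.exp (-(dist x y) ^ 2 / (2 * c * (s * t)))) *
              f y ^ p ∂μ) ^ (1 / p) := by
  have hpq : p.HolderConjugate (p / (p - 1)) :=
    (Real.holderConjugate_iff_eq_conjExponent (by linarith)).2 rfl
  set q := p / (p - 1)
  set M := ENNReal.ofReal CG ^ q * ENNReal.ofReal K ^ (q - 1) *
    (annularSum (2 * c) (ENNReal.ofReal C_D) * ENNReal.ofReal Ch)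
  have hM : M ≠ ∞ :=
    ENNReal.mul_ne_top (ENNReal.mul_ne_top
      (ENNReal.rpow_ne_top_of_nonneg hpq.symm.nonneg ENNReal.ofReal_ne_top)
      (ENNReal.rpow_ne_top_of_nonneg hpq.symm.sub_one_pos.le ENNReal.ofReal_ne_top))
      (ENNReal.mul_ne_top (annularSum_ne_top (by positivity) ENNReal.ofReal_ne_top)
        ENNReal.ofReal_ne_top)
  refine ⟨(M ^ q⁻¹).toReal + 1, by positivity, fun s t x f _ hs ht hst => ?_⟩
  have hT : 0 < s * t := mul_pos hs ht
  have hdecay : √(s * t) ^ (-ε) = (s * t) ^ (-(ε / 2)) := by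
    rw [Real.sqrt_eq_rpow, ← Real.rpow_mul hT.le]; congr 1; ring
  have hexp : -(ε / 2) * q⁻¹ = -(ε / (2 * q)) := by rw [neg_mul, ← div_eq_mul_inv, div_div]
  calc ∫⁻ y, pk (s * t) x y * h y * f y ∂μ
      ≤ (M * ENNReal.ofReal ((s * t) ^ (-(ε / 2)))) ^ q⁻¹ * _ := by
        convert lintegral_kernel_mul_mul_le hdoub hmeas hbdd hε₀.le hGD hpq hc hst x
          (fun y => hGauss _ x y hT) using 3
        rw [hdecay, ENNReal.ofReal_mul' (by positivity)]
        ring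
    _ ≤ _ := by
        rw [one_div, ← hexp]
        gcongr
        exact rpow_inv_mul_ofReal_rpow_le hM hpq.symm.pos hT _

/-- Heat kernel with Gaussian upper bound against a bounded function `h` satisfying the
average decay condition `(GD)`: for `p ∈ (2,∞)`, `p' = p/(p-1)` and `st > 1`,
`∫ p_{st}(x,y) h(y) f(y) dμ(y) ≤ C (st)^{-ε/(2p')}
  (∫ V(x,√(st))⁻¹ e^{-d(x,y)²/(2cst)} f(y)^p dμ(y))^{1/p}`. -/
theorem kernel_decay_estimate {X : Type*} [MetricSpace X] [MeasurableSpace X]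
    (μ : Measure X) (C_D : ℝ) (hCD : 1 ≤ C_D)
    (hdoub : ∀ (x : X) (r : ℝ), 0 < r →
      μ (ball x (2 * r)) ≤ ENNReal.ofReal C_D * μ (ball x r))
    (pk : ℝ → X → X → ℝ≥0∞) (CG c : ℝ) (hCG : 0 < CG) (hc : 0 < c)
    (hGauss : ∀ (t : ℝ) (x y : X), 0 < t →
      pk t x y ≤ (μ (ball x (Real.sqrt t)))⁻¹ *
        ENNReal.ofReal (CG * Real.exp (-(dist x y) ^ 2 / (c * t))))
    (h : X → ℝ≥0∞) (hmeas : Measurable h) (K : ℝ) (hbdd : ∀ x, h x ≤ ENNReal.ofReal K)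
    (ε Ch : ℝ) (hε₀ : 0 < ε) (hε₁ : ε < 1) (hCh : 0 < Ch)
    (hGD : ∀ (x : X) (r : ℝ), 1 < r →
      (μ (ball x r))⁻¹ * ∫⁻ y in ball x r, h y ∂μ ≤ ENNReal.ofReal (Ch * r ^ (-ε)))
    (p : ℝ) (hp : 2 < p) :
    ∃ C : ℝ, 0 < C ∧ ∀ (s t : ℝ) (x : X) (f : X → ℝ≥0∞), Measurable f →
      0 < s → 0 < t → 1 < s * t →
      ∫⁻ y, pk (s * t) x y * h y * f y ∂μ ≤
        ENNReal.ofReal (C * (s * t) ^ (-(ε / (2 * (p / (p - 1)))))) *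
          (∫⁻ y, (μ (ball x (Real.sqrt (s * t))))⁻¹ *
            ENNReal.ofReal (Real.exp (-(dist x y) ^ 2 / (2 * c * (s * t)))) *
              f y ^ p ∂μ) ^ (1 / p) :=
  kernel_decay_estimate_general μ C_D hdoub pk CG c hc hGauss h hmeas K hbdd ε Ch hε₀ hGD p hp
end

section
/- Let e^{-tL} be a bounded analytic semigroup on L^p with ‖(1+stL)e^{-stL}‖_{p→p} ≤ C uniformly in s,t > 0, and suppose ‖∇(1+tL)^{-1}‖_{p→p} ≤ Ct^{-ν} for all t > 1 with ν ∈ [0,1/2), and ‖∇e^{-rL}‖_{p→p} ≤ Cr^{-1/2}e^r for r > 0. Then ‖∇(1+tL)^{-1/2}‖_{p→p} ≤ C't^{-ν} for all t > 1. -/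
open MeasureTheory Real Set

/-!
Compare the subordination kernel `e^{-s}` with `e^{-ts/2}`. After the substitution `s ↦ ts/2`,
the second kernel reproduces `(t/2)^{-1/2}` times the subordination integral at `t = 2`. On
`s ≤ 1/t` the two kernels differ by at most `ts/2`, which absorbs the `(st)^{-1/2}` singularity
of `∇e^{-stL}`; on `s > 1/t` the factorisation `∇e^{-rL} = ∇(1+rL)^{-1} (1+rL)e^{-rL}` gives the
decay `(st)^{-ν}`, integrable against `e^{-s/2} s^{-1/2}` because `ν < 1/2`.
-/

lemma abs_exp_neg_sub_exp_neg_le {a b : ℝ} (ha : 0 ≤ a) (hb : 0 ≤ b) :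
    |exp (-a) - exp (-b)| ≤ |a - b| := by
  wlog hba : b ≤ a generalizing a b
  · rw [abs_sub_comm, abs_sub_comm a]
    exact this hb ha (le_of_not_ge hba)
  have hsplit : exp (-a) = exp (-b) * exp (-(a - b)) := by rw [← exp_add]; ring_nf
  have htaylor := one_sub_le_exp_neg (a - b)
  have hb1 : exp (-b) ≤ 1 := exp_le_one_iff.mpr (by linarith)
  rw [abs_of_nonpos (by simpa using hba), abs_of_nonneg (by linarith)]
  nlinarith [exp_pos (-b)]

section KernelDifference

variable {t σ : ℝ}

lemma abs_exp_neg_sub_exp_neg_half_mul_le_mul (ht : 1 ≤ t) (hσ : 0 ≤ σ) :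
    |exp (-σ) - exp (-(t / 2 * σ))| ≤ t / 2 * σ := by
  refine (abs_exp_neg_sub_exp_neg_le hσ (by positivity)).trans ?_
  rw [show σ - t / 2 * σ = (1 - t / 2) * σ by ring, abs_mul, abs_of_nonneg hσ]
  gcongr
  exact abs_le.mpr ⟨by linarith, by linarith⟩

lemma abs_exp_neg_sub_exp_neg_half_mul_le_exp (ht : 1 ≤ t) (hσ : 0 ≤ σ) :
    |exp (-σ) - exp (-(t / 2 * σ))| ≤ exp (-(σ / 2)) :=
  abs_sub_le_of_nonneg_of_le (exp_pos _).le (exp_le_exp.mpr (by linarith)) (exp_pos _).le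
    (exp_le_exp.mpr (by nlinarith))

end KernelDifference

lemma integrableOn_exp_neg_half_mul_rpow {ν : ℝ} (hν : ν < 1 / 2) :
    IntegrableOn (fun σ : ℝ => exp (-(σ / 2)) * σ ^ (-(1 / 2) - ν)) (Ioi 0) := by
  refine (integrableOn_rpow_mul_exp_neg_mul_rpow (s := -(1 / 2) - ν) (p := 1) (b := 1 / 2)
    (by linarith) one_pos one_half_pos).congr_fun (fun σ _ => ?_) measurableSet_Ioi
  dsimp only
  rw [rpow_one, mul_comm]
  ring_nf

section Subordination

variable {E : Type*} [NormedAddCommGroup E] [NormedSpace ℝ E]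

lemma integral_exp_neg_mul_div_sqrt_smul_comp_mul_Ioi (F : ℝ → E) {a : ℝ} (ha : 0 < a) :
    ∫ σ in Ioi 0, (exp (-(a * σ)) / √σ) • F (a * σ) =
      (√a)⁻¹ • ∫ s in Ioi 0, (exp (-s) / √s) • F s := by
  have hscale : ∀ σ ∈ Ioi (0 : ℝ), (exp (-(a * σ)) / √σ) • F (a * σ) =
      √a • ((exp (-(a * σ)) / √(a * σ)) • F (a * σ)) := fun σ hσ => by
    rw [smul_smul, sqrt_mul ha.le]
    field_simp
  rw [setIntegral_congr_fun measurableSet_Ioi hscale, integral_smul,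
    integral_comp_mul_left_Ioi (fun s => (exp (-s) / √s) • F s) 0 ha, mul_zero, smul_smul,
    ← div_eq_mul_inv, sqrt_div_self]

noncomputable def subordinationIntegral (g : ℝ → E) (t : ℝ) : E :=
  ∫ s in Ioi 0, (exp (-s) / √s) • g (s * t)

variable {g : ℝ → E} {A B ν t : ℝ}

lemma norm_kernel_sub_smul_le (hB : 0 ≤ B)
    (hsmall : ∀ r, 0 < r → r ≤ 1 → ‖g r‖ ≤ A / √r)
    (hlarge : ∀ r, 1 < r → ‖g r‖ ≤ B * r ^ (-ν)) (ht : 1 ≤ t) {σ : ℝ} (hσ : 0 < σ) :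
    ‖((exp (-σ) - exp (-(t / 2 * σ))) / √σ) • g (σ * t)‖ ≤
      (Iic t⁻¹).indicator (fun _ => A * √t / 2) σ +
        B * t ^ (-ν) * (exp (-(σ / 2)) * σ ^ (-(1 / 2) - ν)) := by
  have ht0 : 0 < t := by linarith
  rw [norm_smul, norm_div, Real.norm_eq_abs, Real.norm_of_nonneg (sqrt_nonneg σ)]
  by_cases hσt : σ ≤ t⁻¹
  · have hr : σ * t ≤ 1 := by
      simpa [inv_mul_cancel₀ ht0.ne'] using mul_le_mul_of_nonneg_right hσt ht0.le
    rw [indicator_of_mem (mem_Iic.mpr hσt)]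
    calc |exp (-σ) - exp (-(t / 2 * σ))| / √σ * ‖g (σ * t)‖
        ≤ t / 2 * σ / √σ * (A / √(σ * t)) := by
          gcongr
          · exact abs_exp_neg_sub_exp_neg_half_mul_le_mul ht hσ.le
          · exact hsmall _ (by positivity) hr
      _ = A * √t / 2 := by
          rw [sqrt_mul hσ.le]
          field_simp
          rw [sq_sqrt hσ.le, sq_sqrt ht0.le]
          ring
      _ ≤ _ := le_add_of_nonneg_right (by positivity)
  · have hr : 1 < σ * t := (inv_lt_iff_one_lt_mul₀ ht0).mp (not_le.mp hσt)
    rw [indicator_of_notMem (notMem_Iic.mpr (not_le.mp hσt)), zero_add]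
    calc |exp (-σ) - exp (-(t / 2 * σ))| / √σ * ‖g (σ * t)‖
        ≤ exp (-(σ / 2)) / √σ * (B * (σ * t) ^ (-ν)) := by
          gcongr
          · exact abs_exp_neg_sub_exp_neg_half_mul_le_exp ht hσ.le
          · exact hlarge _ hr
      _ = _ := by
          rw [mul_rpow hσ.le ht0.le, rpow_sub hσ, rpow_neg hσ.le (1 / 2), ← sqrt_eq_rpow,
            rpow_neg hσ.le ν]
          field_simp

lemma integrableOn_kernel_sub_smul_and_norm_integral_le (hB : 0 ≤ B) (hν : ν < 1 / 2)
    (hsmall : ∀ r, 0 < r → r ≤ 1 → ‖g r‖ ≤ A / √r)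
    (hlarge : ∀ r, 1 < r → ‖g r‖ ≤ B * r ^ (-ν)) (ht : 1 ≤ t)
    (hg : AEStronglyMeasurable (fun σ => g (σ * t)) (volume.restrict (Ioi 0))) :
    IntegrableOn (fun σ => ((exp (-σ) - exp (-(t / 2 * σ))) / √σ) • g (σ * t)) (Ioi 0) ∧
      ‖∫ σ in Ioi 0, ((exp (-σ) - exp (-(t / 2 * σ))) / √σ) • g (σ * t)‖ ≤
        A / (2 * √t) + B * t ^ (-ν) * ∫ σ in Ioi 0, exp (-(σ / 2)) * σ ^ (-(1 / 2) - ν) := by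
  have ht0 : 0 < t := by linarith
  have hvol : (volume.restrict (Ioi 0)).real (Iic t⁻¹) = t⁻¹ := by
    rw [measureReal_restrict_apply measurableSet_Iic, Iic_inter_Ioi,
      volume_real_Ioc_of_le (by positivity), sub_zero]
  have hind : IntegrableOn ((Iic t⁻¹).indicator fun _ => A * √t / 2) (Ioi 0) := by
    refine (integrable_indicator_iff measurableSet_Iic).mpr (integrableOn_const ?_)
    rw [Measure.restrict_apply measurableSet_Iic, Iic_inter_Ioi]
    exact measure_Ioc_lt_top.ne
  have hgam := (integrableOn_exp_neg_half_mul_rpow hν).const_mul (B * t ^ (-ν))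
  have hdom : ∀ᵐ σ ∂(volume.restrict (Ioi 0)),
      ‖((exp (-σ) - exp (-(t / 2 * σ))) / √σ) • g (σ * t)‖ ≤
        (Iic t⁻¹).indicator (fun _ => A * √t / 2) σ +
          B * t ^ (-ν) * (exp (-(σ / 2)) * σ ^ (-(1 / 2) - ν)) :=
    (ae_restrict_mem measurableSet_Ioi).mono fun σ hσ =>
      norm_kernel_sub_smul_le hB hsmall hlarge ht hσ
  have hmeas : AEStronglyMeasurable
      (fun σ => ((exp (-σ) - exp (-(t / 2 * σ))) / √σ) • g (σ * t)) (volume.restrict (Ioi 0)) :=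
    (by fun_prop : Measurable fun σ => (exp (-σ) - exp (-(t / 2 * σ))) / √σ)
      |>.aestronglyMeasurable.smul hg
  refine ⟨(hind.add hgam).mono' hmeas hdom,
    (norm_integral_le_of_norm_le (hind.add hgam) hdom).trans_eq ?_⟩
  simp only [Pi.add_apply]
  rw [integral_add hind hgam, integral_indicator_const _ measurableSet_Iic, hvol,
    integral_const_mul, smul_eq_mul]
  congr 1
  field_simp
  rw [sq_sqrt ht0.le, mul_comm]

lemma norm_subordinationIntegral_le_norm_add (hA : 0 ≤ A) (hB : 0 ≤ B) (hν : ν < 1 / 2)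
    (hsmall : ∀ r, 0 < r → r ≤ 1 → ‖g r‖ ≤ A / √r)
    (hlarge : ∀ r, 1 < r → ‖g r‖ ≤ B * r ^ (-ν)) (ht : 1 ≤ t) :
    ‖subordinationIntegral g t‖ ≤ ‖∫ σ in Ioi 0, (exp (-(t / 2 * σ)) / √σ) • g (σ * t)‖ +
      (A / (2 * √t) + B * t ^ (-ν) * ∫ σ in Ioi 0, exp (-(σ / 2)) * σ ^ (-(1 / 2) - ν)) := by
  by_cases hint : IntegrableOn (fun σ => (exp (-σ) / √σ) • g (σ * t)) (Ioi 0)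
  swap
  · rw [subordinationIntegral, integral_undef hint, norm_zero]
    have hJ : 0 ≤ ∫ σ in Ioi 0, exp (-(σ / 2)) * σ ^ (-(1 / 2) - ν) :=
      setIntegral_nonneg measurableSet_Ioi fun σ (hσ : 0 < σ) => by positivity
    positivity
  have hg : AEStronglyMeasurable (fun σ => g (σ * t)) (volume.restrict (Ioi 0)) := by
    refine ((by fun_prop : Measurable fun σ : ℝ => √σ * exp σ).aestronglyMeasurable.smul
      hint.aestronglyMeasurable).congr ?_
    filter_upwards [ae_restrict_mem measurableSet_Ioi] with σ (hσ : 0 < σ)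
    change (√σ * exp σ) • (exp (-σ) / √σ) • g (σ * t) = g (σ * t)
    rw [smul_smul, exp_neg]
    field_simp
    rw [one_smul]
  obtain ⟨hdint, hdnorm⟩ :=
    integrableOn_kernel_sub_smul_and_norm_integral_le hB hν hsmall hlarge ht hg
  have hdiff : ∫ σ in Ioi 0, (exp (-(t / 2 * σ)) / √σ) • g (σ * t) =
      subordinationIntegral g t -
        ∫ σ in Ioi 0, ((exp (-σ) - exp (-(t / 2 * σ))) / √σ) • g (σ * t) := by
    rw [subordinationIntegral, ← integral_sub hint hdint]
    congr with σ
    rw [sub_div, sub_smul, sub_sub_cancel]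
  rw [hdiff]
  exact (norm_le_norm_sub_add _ _).trans (by gcongr)

lemma norm_subordinationIntegral_le (hA : 0 ≤ A) (hB : 0 ≤ B) (hν : ν < 1 / 2)
    (hsmall : ∀ r, 0 < r → r ≤ 1 → ‖g r‖ ≤ A / √r)
    (hlarge : ∀ r, 1 < r → ‖g r‖ ≤ B * r ^ (-ν)) (ht : 1 ≤ t) :
    ‖subordinationIntegral g t‖ ≤ (√2 * ‖subordinationIntegral g 2‖ + A / 2 +
      B * ∫ σ in Ioi 0, exp (-(σ / 2)) * σ ^ (-(1 / 2) - ν)) * t ^ (-ν) := by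
  set J := ∫ σ in Ioi 0, exp (-(σ / 2)) * σ ^ (-(1 / 2) - ν)
  have ht0 : 0 < t := by linarith
  have hcov : ∫ σ in Ioi 0, (exp (-(t / 2 * σ)) / √σ) • g (σ * t) =
      (√(t / 2))⁻¹ • subordinationIntegral g 2 := by
    rw [subordinationIntegral, ← integral_exp_neg_mul_div_sqrt_smul_comp_mul_Ioi
      (fun s => g (s * 2)) (by positivity : 0 < t / 2)]
    congr! 4 with σ
    ring
  have hdecay : (√t)⁻¹ ≤ t ^ (-ν) := by
    rw [sqrt_eq_rpow, ← rpow_neg ht0.le]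
    exact rpow_le_rpow_of_exponent_le ht (by linarith)
  calc ‖subordinationIntegral g t‖
      ≤ (√(t / 2))⁻¹ * ‖subordinationIntegral g 2‖ + (A / (2 * √t) + B * t ^ (-ν) * J) := by
        simpa only [hcov, norm_smul, norm_inv, norm_of_nonneg (sqrt_nonneg _)] using
          norm_subordinationIntegral_le_norm_add hA hB hν hsmall hlarge ht
    _ = (√2 * ‖subordinationIntegral g 2‖ + A / 2) * (√t)⁻¹ + B * J * t ^ (-ν) := by
        rw [sqrt_div ht0.le]
        field_simp
        ring
    _ ≤ (√2 * ‖subordinationIntegral g 2‖ + A / 2) * t ^ (-ν) + B * J * t ^ (-ν) := by gcongr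
    _ = _ := by ring

end Subordination

theorem grad_sqrt_resolvent_decay_general {E : Type*} [NormedAddCommGroup E] [NormedSpace ℝ E]
    (R G M Q : ℝ → E →L[ℝ] E) (C ν : ℝ) (hC : 0 < C) (hν₁ : ν < 1/2)
    (hM : ∀ r : ℝ, 0 < r → ‖M r‖ ≤ C)
    (hfact : ∀ r : ℝ, 0 < r → G r = (R r).comp (M r))
    (hR : ∀ t : ℝ, 1 < t → ‖R t‖ ≤ C * t ^ (-ν))
    (hG : ∀ r : ℝ, 0 < r → ‖G r‖ ≤ C * r ^ (-(1:ℝ)/2) * Real.exp r)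
    (hQ : ∀ t : ℝ, 1 < t → ∀ x : E, Q t x = (Real.sqrt π)⁻¹ •
      ∫ s in Set.Ioi (0:ℝ), (Real.exp (-s) / Real.sqrt s) • G (s * t) x) :
    ∃ C' : ℝ, 0 < C' ∧ ∀ t : ℝ, 1 < t → ‖Q t‖ ≤ C' * t ^ (-ν) := by
  have hGsmall : ∀ r, 0 < r → r ≤ 1 → ‖G r‖ ≤ C * exp 1 / √r := fun r hr hr1 =>
    (hG r hr).trans <| by
      rw [neg_div, rpow_neg hr.le, ← sqrt_eq_rpow, div_eq_mul_inv, mul_right_comm]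
      gcongr
  have hGlarge : ∀ r, 1 < r → ‖G r‖ ≤ C ^ 2 * r ^ (-ν) := fun r hr => by
    rw [hfact r (by linarith), sq, mul_right_comm]
    exact ((R r).opNorm_comp_le (M r)).trans
      (mul_le_mul (hR r hr) (hM r (by linarith)) (norm_nonneg _) (by positivity))
  set J := ∫ σ in Ioi 0, exp (-(σ / 2)) * σ ^ (-(1 / 2) - ν) with hJ
  have hJ0 : 0 ≤ J := setIntegral_nonneg measurableSet_Ioi fun σ (hσ : 0 < σ) => by positivity
  refine ⟨√2 * ‖Q 2‖ + (√π)⁻¹ * (C * exp 1 / 2 + C ^ 2 * J), by positivity, fun t ht => ?_⟩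
  refine (Q t).opNorm_le_bound (by positivity) fun x => ?_
  have hI : ∀ s, 1 < s → subordinationIntegral (fun r => G r x) s = √π • Q s x := fun s hs => by
    rw [hQ s hs x, smul_inv_smul₀ (by positivity)]
    rfl
  have key := norm_subordinationIntegral_le (g := fun r => G r x)
    (A := C * exp 1 * ‖x‖) (B := C ^ 2 * ‖x‖) (by positivity) (by positivity) hν₁
    (fun r hr hr1 => ((G r).le_of_opNorm_le (hGsmall r hr hr1) x).trans_eq (by ring))
    (fun r hr => ((G r).le_of_opNorm_le (hGlarge r hr) x).trans_eq (by ring)) ht.le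
  rw [hI t ht, hI 2 one_lt_two, norm_smul, norm_smul, norm_of_nonneg (sqrt_nonneg π), ← hJ] at key
  refine le_of_mul_le_mul_left (key.trans ?_) (by positivity : 0 < √π)
  calc _ ≤ (√2 * (√π * (‖Q 2‖ * ‖x‖)) + C * exp 1 * ‖x‖ / 2 + C ^ 2 * ‖x‖ * J) * t ^ (-ν) := by
        gcongr
        exact (Q 2).le_opNorm x
    _ = _ := by
        field_simp
        ring

/-- Abstract version of: if `‖(1+stL)e^{-stL}‖ ≤ C` uniformly, `‖∇(1+tL)⁻¹‖ ≤ C t^{-ν}`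
for `t > 1` with `ν ∈ [0,1/2)`, and `‖∇e^{-rL}‖ ≤ C r^{-1/2} e^r` for `r > 0`, then by
subordination `‖∇(1+tL)^{-1/2}‖ ≤ C' t^{-ν}` for `t > 1`. Here `R t = ∇(1+tL)⁻¹`,
`G r = ∇e^{-rL}`, `M r = (1+rL)e^{-rL}` and `Q t = ∇(1+tL)^{-1/2}` is given by the
subordination formula `Q t = π^{-1/2} ∫_0^∞ e^{-s} s^{-1/2} ∇e^{-stL} ds`. -/
theorem grad_sqrt_resolvent_decay {E : Type*} [NormedAddCommGroup E] [NormedSpace ℝ E]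
    (R G M Q : ℝ → E →L[ℝ] E) (C ν : ℝ) (hC : 0 < C) (hν₀ : 0 ≤ ν) (hν₁ : ν < 1/2)
    (hM : ∀ r : ℝ, 0 < r → ‖M r‖ ≤ C)
    (hfact : ∀ r : ℝ, 0 < r → G r = (R r).comp (M r))
    (hR : ∀ t : ℝ, 1 < t → ‖R t‖ ≤ C * t ^ (-ν))
    (hG : ∀ r : ℝ, 0 < r → ‖G r‖ ≤ C * r ^ (-(1:ℝ)/2) * Real.exp r)
    (hQ : ∀ t : ℝ, 1 < t → ∀ x : E, Q t x = (Real.sqrt π)⁻¹ •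
      ∫ s in Set.Ioi (0:ℝ), (Real.exp (-s) / Real.sqrt s) • G (s * t) x) :
    ∃ C' : ℝ, 0 < C' ∧ ∀ t : ℝ, 1 < t → ‖Q t‖ ≤ C' * t ^ (-ν) :=
  grad_sqrt_resolvent_decay_general R G M Q C ν hC hν₁ hM hfact hR hG hQ
end
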